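/- Let G be a finite connected simple graph whose Lin–Lu–Yau Ricci curvature satisfies κ_LLY(x,y) ≥ κ_0 > 0 for every edge xy. Then Diam(G) ≤ ⌊2/κ_0⌋. -/

import Mathlib

/-!
Let `x = x₀, …, x_D = y` be a geodesic and `α < 1`. The triangle inequality for the
Wasserstein distance gives
`W(m_x^α, m_y^α) ≤ ∑ᵢ W(m_{xᵢ}^α, m_{xᵢ₊₁}^α) = ∑ᵢ (1 - κ_α(xᵢ, xᵢ₊₁))`,
while testing against the 1-Lipschitz function `d(x, ·)` gives
`W(m_x^α, m_y^α) ≥ D - 2(1 - α)`. Hence `∑ᵢ κ_α(xᵢ, xᵢ₊₁) / (1 - α) ≤ 2`, and letting `α → 1`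
yields `D κ₀ ≤ ∑ᵢ κ_LLY(xᵢ, xᵢ₊₁) ≤ 2`. The limit defining `κ_LLY` exists on edges because there
`κ_α / (1 - α)` is monotone in `α` and bounded by `2`.
-/

open Finset

/-- A probability measure on a finite set, given as a density. -/
def IsProbMeasure {V : Type*} [Fintype V] (m : V → ℝ) : Prop :=
  (∀ x, 0 ≤ m x) ∧ ∑ x, m x = 1

/-- A coupling between two probability measures on a finite set. -/
def IsCoupling {V : Type*} [Fintype V] (A : V × V → ℝ) (m₁ m₂ : V → ℝ) : Prop :=
  (∀ p, 0 ≤ A p) ∧ (∀ x, ∑ y, A (x, y) = m₁ x) ∧ (∀ y, ∑ x, A (x, y) = m₂ y)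

/-- The Wasserstein-1 (transportation) distance between two probability measures on a
finite set, with respect to a cost `d`. -/
noncomputable def W {V : Type*} [Fintype V] (d : V → V → ℝ) (m₁ m₂ : V → ℝ) : ℝ :=
  sInf {c | ∃ A, IsCoupling A m₁ m₂ ∧ c = ∑ p : V × V, A p * d p.1 p.2}

lemma W_symm {V : Type*} [Fintype V] (d : V → V → ℝ) (hd : ∀ x y, d x y = d y x)
    (m₁ m₂ : V → ℝ) : W d m₁ m₂ = W d m₂ m₁ := by
  have key : ∀ m₁ m₂ : V → ℝ,
      {c | ∃ A, IsCoupling A m₁ m₂ ∧ c = ∑ p : V × V, A p * d p.1 p.2} ⊆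
      {c | ∃ A, IsCoupling A m₂ m₁ ∧ c = ∑ p : V × V, A p * d p.1 p.2} := by
    rintro m₁ m₂ c ⟨A, ⟨h0, h1, h2⟩, rfl⟩
    refine ⟨fun p => A (p.2, p.1), ⟨fun p => h0 _, fun x => h2 x, fun y => h1 y⟩, ?_⟩
    refine Fintype.sum_equiv (Equiv.prodComm V V) _ _ ?_
    intro p
    simp [Equiv.prodComm, hd p.1 p.2]
  unfold W
  congr 1
  exact Set.Subset.antisymm (key m₁ m₂) (key m₂ m₁)

/-- The `α`-lazy random walk measure at a vertex `x` of a graph. -/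
noncomputable def lazyWalk {V : Type*} [Fintype V] [DecidableEq V] (G : SimpleGraph V)
    [DecidableRel G.Adj] (α : ℝ) (x : V) : V → ℝ :=
  fun v => if v = x then α else if G.Adj x v then (1 - α) / (G.degree x) else 0

/-- The `α`-Ricci curvature `κ_α(x,y) = 1 - W(m_x^α, m_y^α)/d(x,y)`. -/
noncomputable def kappaAlpha {V : Type*} [Fintype V] [DecidableEq V] (G : SimpleGraph V)
    [DecidableRel G.Adj] (α : ℝ) (x y : V) : ℝ :=
  1 - W (fun a b => (G.dist a b : ℝ)) (lazyWalk G α x) (lazyWalk G α y) / (G.dist x y)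

lemma kappaAlpha_symm {V : Type*} [Fintype V] [DecidableEq V] (G : SimpleGraph V)
    [DecidableRel G.Adj] (α : ℝ) (x y : V) :
    kappaAlpha G α x y = kappaAlpha G α y x := by
  unfold kappaAlpha
  rw [W_symm _ (fun a b => by rw [SimpleGraph.dist_comm]),
    SimpleGraph.dist_comm]

/-- The Lin–Lu–Yau Ricci curvature `κ_LLY(x,y) = lim_{α → 1⁻} κ_α(x,y)/(1-α)`. -/
noncomputable def kappaLLY {V : Type*} [Fintype V] [DecidableEq V] (G : SimpleGraph V)
    [DecidableRel G.Adj] (x y : V) : ℝ :=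
  Filter.limUnder (nhdsWithin 1 (Set.Ico (0:ℝ) 1)) (fun α => kappaAlpha G α x y / (1 - α))

lemma kappaLLY_symm {V : Type*} [Fintype V] [DecidableEq V] (G : SimpleGraph V)
    [DecidableRel G.Adj] (x y : V) : kappaLLY G x y = kappaLLY G y x := by
  unfold kappaLLY
  congr 1
  funext α
  rw [kappaAlpha_symm]

/-- Integral `α`-Ricci curvature `I^α_{κ₀}`: total amount of `α`-Ricci curvature below the
threshold `(1-α)κ₀`, summed over the edges of `G`. -/
noncomputable def IAlpha {V : Type*} [Fintype V] [DecidableEq V] (G : SimpleGraph V)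
    [DecidableRel G.Adj] (α κ₀ : ℝ) : ℝ :=
  ∑ e ∈ G.edgeFinset,
    Sym2.lift ⟨fun x y => max 0 ((1 - α) * κ₀ - kappaAlpha G α x y),
      fun x y => by simp only []; rw [kappaAlpha_symm]⟩ e

/-- Integral Lin–Lu–Yau Ricci curvature `I_{κ₀}`: total amount of Lin–Lu–Yau Ricci curvature
below the threshold `κ₀`, summed over the edges of `G`. -/
noncomputable def ILLY {V : Type*} [Fintype V] [DecidableEq V] (G : SimpleGraph V)
    [DecidableRel G.Adj] (κ₀ : ℝ) : ℝ :=
  ∑ e ∈ G.edgeFinset,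
    Sym2.lift ⟨fun x y => max 0 (κ₀ - kappaLLY G x y),
      fun x y => by simp only []; rw [kappaLLY_symm]⟩ e

/-- The diameter of a finite graph. -/
noncomputable def gDiam {V : Type*} [Fintype V] (G : SimpleGraph V) : ℕ :=
  Finset.univ.sup fun p : V × V => G.dist p.1 p.2

section Wasserstein

variable {V : Type*} [Fintype V] {d : V → V → ℝ} {m₁ m₂ m₃ n₁ n₂ : V → ℝ} {A B : V × V → ℝ}

def transportCost (d : V → V → ℝ) (A : V × V → ℝ) : ℝ :=
  ∑ p : V × V, A p * d p.1 p.2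

/-- The composite of the transport plans `A` (into `m`) and `B` (out of `m`). -/
noncomputable def gluing (A B : V × V → ℝ) (m : V → ℝ) : V × V → ℝ :=
  fun p => ∑ y, A (p.1, y) * B (y, p.2) / m y

namespace IsCoupling

lemma prod (h₁ : IsProbMeasure m₁) (h₂ : IsProbMeasure m₂) :
    IsCoupling (fun p : V × V => m₁ p.1 * m₂ p.2) m₁ m₂ :=
  ⟨fun p => mul_nonneg (h₁.1 _) (h₂.1 _), fun x => by simp only [← mul_sum, h₂.2, mul_one],
    fun y => by simp only [← sum_mul, h₁.2, one_mul]⟩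

lemma snd_nonneg (hA : IsCoupling A m₁ m₂) (y : V) : 0 ≤ m₂ y :=
  hA.2.2 y ▸ sum_nonneg fun x _ => hA.1 (x, y)

lemma le_fst (hA : IsCoupling A m₁ m₂) (x y : V) : A (x, y) ≤ m₁ x :=
  hA.2.1 x ▸ single_le_sum (fun z _ => hA.1 (x, z)) (mem_univ y)

lemma le_snd (hA : IsCoupling A m₁ m₂) (x y : V) : A (x, y) ≤ m₂ y :=
  hA.2.2 y ▸ single_le_sum (fun z _ => hA.1 (z, y)) (mem_univ x)

lemma sum_mul_fst (hA : IsCoupling A m₁ m₂) (f : V → ℝ) :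
    ∑ p : V × V, A p * f p.1 = ∑ x, m₁ x * f x := by
  rw [Fintype.sum_prod_type]
  exact sum_congr rfl fun x _ => by simp only [← sum_mul, hA.2.1 x]

lemma sum_mul_snd (hA : IsCoupling A m₁ m₂) (f : V → ℝ) :
    ∑ p : V × V, A p * f p.2 = ∑ y, m₂ y * f y := by
  rw [Fintype.sum_prod_type_right]
  exact sum_congr rfl fun y _ => by simp only [← sum_mul, hA.2.2 y]

/-- Where `m₂ y = 0` the division in `gluing` yields `0`, which is right since then
`A (x, y) = B (y, z) = 0`. -/
lemma sum_gluing_eq (hA : IsCoupling A m₁ m₂) (hB : IsCoupling B m₂ m₃) :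
    (∀ x y, ∑ z, A (x, y) * B (y, z) / m₂ y = A (x, y)) ∧
      ∀ y z, ∑ x, A (x, y) * B (y, z) / m₂ y = B (y, z) := by
  constructor
  · intro x y
    rw [← sum_div, ← mul_sum, hB.2.1 y]
    rcases eq_or_ne (m₂ y) 0 with h | h
    · simp [h, le_antisymm (h ▸ hA.le_snd x y) (hA.1 _)]
    · exact mul_div_cancel_right₀ _ h
  · intro y z
    rw [← sum_div, ← sum_mul, hA.2.2 y]
    rcases eq_or_ne (m₂ y) 0 with h | h
    · simp [h, le_antisymm (h ▸ hB.le_fst y z) (hB.1 _)]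
    · exact mul_div_cancel_left₀ _ h

lemma gluing (hA : IsCoupling A m₁ m₂) (hB : IsCoupling B m₂ m₃) :
    IsCoupling (gluing A B m₂) m₁ m₃ := by
  obtain ⟨hrow, hcol⟩ := hA.sum_gluing_eq hB
  refine ⟨fun p => sum_nonneg fun y _ =>
    div_nonneg (mul_nonneg (hA.1 _) (hB.1 _)) (hA.snd_nonneg y), fun x => ?_, fun z => ?_⟩
  · simp only [_root_.gluing]
    rw [sum_comm]
    simp only [hrow, hA.2.1 x]
  · simp only [_root_.gluing]
    rw [sum_comm]
    simp only [hcol, hB.2.2 z]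

end IsCoupling

lemma transportCost_gluing_le (hA : IsCoupling A m₁ m₂) (hB : IsCoupling B m₂ m₃)
    (htri : ∀ x y z, d x z ≤ d x y + d y z) :
    transportCost d (gluing A B m₂) ≤ transportCost d A + transportCost d B := by
  obtain ⟨hrow, hcol⟩ := hA.sum_gluing_eq hB
  set T : V → V → V → ℝ := fun x y z => A (x, y) * B (y, z) / m₂ y
  have hT : ∀ x y z, 0 ≤ T x y z := fun x y z =>
    div_nonneg (mul_nonneg (hA.1 _) (hB.1 _)) (hA.snd_nonneg y)
  have hC : transportCost d (gluing A B m₂) = ∑ x, ∑ y, ∑ z, T x y z * d x z := by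
    simp only [transportCost, gluing, Fintype.sum_prod_type, sum_mul]
    exact sum_congr rfl fun x _ => sum_comm
  have hA' : transportCost d A = ∑ x, ∑ y, ∑ z, T x y z * d x y := by
    simp only [transportCost, Fintype.sum_prod_type, ← sum_mul, T, hrow]
  have hB' : transportCost d B = ∑ x, ∑ y, ∑ z, T x y z * d y z := by
    calc transportCost d B = ∑ y, ∑ z, ∑ x, T x y z * d y z := by
          simp only [transportCost, Fintype.sum_prod_type, ← sum_mul, T, hcol]
      _ = ∑ y, ∑ x, ∑ z, T x y z * d y z := sum_congr rfl fun y _ => sum_comm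
      _ = ∑ x, ∑ y, ∑ z, T x y z * d y z := sum_comm
  rw [hC, hA', hB', ← sum_add_distrib]
  refine sum_le_sum fun x _ => ?_
  rw [← sum_add_distrib]
  refine sum_le_sum fun y _ => ?_
  rw [← sum_add_distrib]
  exact sum_le_sum fun z _ => by
    rw [← mul_add]; exact mul_le_mul_of_nonneg_left (htri x y z) (hT x y z)

lemma W_le (hd : ∀ x y, 0 ≤ d x y) (hA : IsCoupling A m₁ m₂) :
    W d m₁ m₂ ≤ transportCost d A := by
  refine csInf_le (show BddBelow _ from ⟨0, ?_⟩) ⟨A, hA, rfl⟩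
  rintro c ⟨A', hA', rfl⟩
  exact sum_nonneg fun p _ => mul_nonneg (hA'.1 p) (hd _ _)

lemma le_W (h₁ : IsProbMeasure m₁) (h₂ : IsProbMeasure m₂) {b : ℝ}
    (hb : ∀ A, IsCoupling A m₁ m₂ → b ≤ transportCost d A) : b ≤ W d m₁ m₂ := by
  refine le_csInf ⟨_, _, IsCoupling.prod h₁ h₂, rfl⟩ ?_
  rintro c ⟨A, hA, rfl⟩
  exact hb A hA

lemma exists_coupling_transportCost_lt (h₁ : IsProbMeasure m₁) (h₂ : IsProbMeasure m₂) {ε : ℝ}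
    (hε : 0 < ε) : ∃ A, IsCoupling A m₁ m₂ ∧ transportCost d A < W d m₁ m₂ + ε := by
  obtain ⟨_, ⟨A, hA, rfl⟩, hlt⟩ :=
    exists_lt_of_csInf_lt (s := {c | ∃ A, IsCoupling A m₁ m₂ ∧ c = transportCost d A})
      ⟨_, _, IsCoupling.prod h₁ h₂, rfl⟩ (lt_add_of_pos_right (W d m₁ m₂) hε)
  exact ⟨A, hA, hlt⟩

lemma W_triangle (hd : ∀ x y, 0 ≤ d x y) (htri : ∀ x y z, d x z ≤ d x y + d y z)
    (h₁ : IsProbMeasure m₁) (h₂ : IsProbMeasure m₂) (h₃ : IsProbMeasure m₃) :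
    W d m₁ m₃ ≤ W d m₁ m₂ + W d m₂ m₃ := by
  refine le_of_forall_pos_lt_add fun ε hε => ?_
  obtain ⟨A, hA, hAε⟩ := exists_coupling_transportCost_lt (d := d) h₁ h₂ (half_pos hε)
  obtain ⟨B, hB, hBε⟩ := exists_coupling_transportCost_lt (d := d) h₂ h₃ (half_pos hε)
  calc W d m₁ m₃ ≤ transportCost d (gluing A B m₂) := W_le hd (hA.gluing hB)
    _ ≤ transportCost d A + transportCost d B := transportCost_gluing_le hA hB htri
    _ < W d m₁ m₂ + W d m₂ m₃ + ε := by linarith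

lemma W_self_nonpos (hd : ∀ x y, 0 ≤ d x y) (hd₀ : ∀ x, d x x = 0) (hm : ∀ x, 0 ≤ m₁ x) :
    W d m₁ m₁ ≤ 0 := by
  classical
  have hdiag : IsCoupling (fun p : V × V => if p.1 = p.2 then m₁ p.1 else 0) m₁ m₁ :=
    ⟨fun p => by by_cases h : p.1 = p.2 <;> simp [h, hm], fun x => by simp, fun y => by simp⟩
  refine (W_le hd hdiag).trans_eq (sum_eq_zero fun p _ => ?_)
  by_cases h : p.1 = p.2 <;> simp [h, hd₀]

lemma isProbMeasure_single {V : Type*} [Fintype V] [DecidableEq V] (x : V) :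
    IsProbMeasure (Pi.single x (1 : ℝ)) :=
  ⟨fun v => by by_cases h : v = x <;> simp [h], by simp⟩

lemma W_single_le [DecidableEq V] (hd : ∀ x y, 0 ≤ d x y) (x y : V) :
    W d (Pi.single x 1) (Pi.single y 1) ≤ d x y := by
  have hδ : IsCoupling (Pi.single (x, y) 1) (Pi.single x 1) (Pi.single y 1) := by
    refine ⟨fun p => ?_, fun u => ?_, fun v => ?_⟩
    · by_cases h : p = (x, y) <;> simp [h]
    · by_cases h : u = x <;> simp [Pi.single_apply, h]
    · by_cases h : v = y <;> simp [Pi.single_apply, h]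
  refine (W_le hd hδ).trans_eq ?_
  simp [transportCost, Pi.single_apply]

lemma IsCoupling.convexComb {a b : ℝ} (ha : 0 ≤ a) (hb : 0 ≤ b) {A B : V × V → ℝ}
    (hA : IsCoupling A m₁ m₂) (hB : IsCoupling B n₁ n₂) :
    IsCoupling (a • A + b • B) (a • m₁ + b • n₁) (a • m₂ + b • n₂) := by
  refine ⟨fun p => ?_, fun x => ?_, fun y => ?_⟩
  · simp only [Pi.add_apply, Pi.smul_apply, smul_eq_mul]
    exact add_nonneg (mul_nonneg ha (hA.1 p)) (mul_nonneg hb (hB.1 p))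
  · simp only [Pi.add_apply, Pi.smul_apply, smul_eq_mul, sum_add_distrib, ← mul_sum, hA.2.1 x,
      hB.2.1 x]
  · simp only [Pi.add_apply, Pi.smul_apply, smul_eq_mul, sum_add_distrib, ← mul_sum, hA.2.2 y,
      hB.2.2 y]

lemma W_convexComb_le (hd : ∀ x y, 0 ≤ d x y) {a b : ℝ} (ha : 0 ≤ a) (hb : 0 ≤ b) (hab : a + b = 1)
    (h₁ : IsProbMeasure m₁) (h₂ : IsProbMeasure m₂) (h₁' : IsProbMeasure n₁)
    (h₂' : IsProbMeasure n₂) :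
    W d (a • m₁ + b • n₁) (a • m₂ + b • n₂) ≤ a * W d m₁ m₂ + b * W d n₁ n₂ := by
  refine le_of_forall_pos_le_add fun ε hε => ?_
  obtain ⟨A, hA, hAε⟩ := exists_coupling_transportCost_lt (d := d) h₁ h₂ hε
  obtain ⟨B, hB, hBε⟩ := exists_coupling_transportCost_lt (d := d) h₁' h₂' hε
  have hcost : transportCost d (a • A + b • B) = a * transportCost d A + b * transportCost d B := by
    simp only [transportCost, Pi.add_apply, Pi.smul_apply, smul_eq_mul, add_mul, sum_add_distrib,
      mul_assoc, ← mul_sum]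
  calc W d (a • m₁ + b • n₁) (a • m₂ + b • n₂) ≤ transportCost d (a • A + b • B) :=
        W_le hd (hA.convexComb ha hb hB)
    _ = a * transportCost d A + b * transportCost d B := hcost
    _ ≤ a * (W d m₁ m₂ + ε) + b * (W d n₁ n₂ + ε) := by gcongr
    _ = a * W d m₁ m₂ + b * W d n₁ n₂ + ε := by linear_combination ε * hab

/-- Easy half of Kantorovich duality. -/
lemma sum_mul_sub_sum_mul_le_W {f : V → ℝ} (hf : ∀ x y, f y - f x ≤ d x y)
    (h₁ : IsProbMeasure m₁) (h₂ : IsProbMeasure m₂) :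
    ∑ y, m₂ y * f y - ∑ x, m₁ x * f x ≤ W d m₁ m₂ := by
  refine le_W h₁ h₂ fun A hA => ?_
  rw [← hA.sum_mul_snd, ← hA.sum_mul_fst, ← sum_sub_distrib]
  exact sum_le_sum fun p _ => by rw [← mul_sub]; exact mul_le_mul_of_nonneg_left (hf _ _) (hA.1 p)

lemma W_le_sum_darts {G : SimpleGraph V} (hd : ∀ x y, 0 ≤ d x y) (hd₀ : ∀ x, d x x = 0)
    (htri : ∀ x y z, d x z ≤ d x y + d y z) {μ : V → V → ℝ} (hμ : ∀ v, IsProbMeasure (μ v))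
    {x y : V} (p : G.Walk x y) :
    W d (μ x) (μ y) ≤ (p.darts.map fun e => W d (μ e.fst) (μ e.snd)).sum := by
  induction p with
  | nil => simpa using W_self_nonpos hd hd₀ (hμ _).1
  | cons h q ih =>
    simp only [SimpleGraph.Walk.darts_cons, List.map_cons, List.sum_cons]
    exact (W_triangle hd htri (hμ _) (hμ _) (hμ _)).trans (add_le_add le_rfl ih)

end Wasserstein

section LazyWalk

variable {V : Type*} [Fintype V] [DecidableEq V] (G : SimpleGraph V) [DecidableRel G.Adj]
  {α : ℝ} {x : V}

lemma sum_lazyWalk_mul (α : ℝ) (x : V) (g : V → ℝ) :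
    ∑ v, lazyWalk G α x v * g v =
      α * g x + (1 - α) / G.degree x * ∑ v ∈ G.neighborFinset x, g v := by
  have hsplit : ∀ v, lazyWalk G α x v
      = (if v = x then α else 0) + if G.Adj x v then (1 - α) / G.degree x else 0 := by
    intro v
    by_cases h : v = x <;> simp [lazyWalk, h]
  simp only [hsplit, add_mul, sum_add_distrib, ite_mul, zero_mul, sum_ite_eq', mem_univ, if_true,
    G.neighborFinset_eq_filter, sum_filter, mul_sum, mul_ite, mul_zero]

lemma isProbMeasure_lazyWalk (h₀ : 0 ≤ α) (h₁ : α ≤ 1) (hx : 0 < G.degree x) :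
    IsProbMeasure (lazyWalk G α x) := by
  have hdeg : (G.degree x : ℝ) ≠ 0 := by positivity
  refine ⟨fun v => ?_, ?_⟩
  · unfold lazyWalk
    split_ifs
    exacts [h₀, div_nonneg (by linarith) (Nat.cast_nonneg _), le_rfl]
  · simpa [G.card_neighborFinset_eq_degree, hdeg] using sum_lazyWalk_mul G α x fun _ => 1

lemma le_sum_lazyWalk_mul (h₀ : 0 ≤ α) (h₁ : α ≤ 1) (hx : 0 < G.degree x) {g : V → ℝ}
    {a b : ℝ} (hgx : a ≤ g x) (hg : ∀ v, G.Adj x v → b ≤ g v) :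
    α * a + (1 - α) * b ≤ ∑ v, lazyWalk G α x v * g v := by
  have hdeg : (G.degree x : ℝ) ≠ 0 := by positivity
  have hc : 0 ≤ (1 - α) / G.degree x := div_nonneg (by linarith) (Nat.cast_nonneg _)
  have hnbr : G.degree x * b ≤ ∑ v ∈ G.neighborFinset x, g v := by
    simpa [G.card_neighborFinset_eq_degree] using card_nsmul_le_sum (G.neighborFinset x) g b
      fun v hv => hg v ((G.mem_neighborFinset x v).1 hv)
  calc α * a + (1 - α) * b = α * a + (1 - α) / G.degree x * (G.degree x * b) := by field_simp
    _ ≤ ∑ v, lazyWalk G α x v * g v := by rw [sum_lazyWalk_mul]; gcongr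

lemma sum_lazyWalk_mul_le (h₀ : 0 ≤ α) (h₁ : α ≤ 1) (hx : 0 < G.degree x) {g : V → ℝ}
    {a b : ℝ} (hgx : g x ≤ a) (hg : ∀ v, G.Adj x v → g v ≤ b) :
    ∑ v, lazyWalk G α x v * g v ≤ α * a + (1 - α) * b := by
  have := le_sum_lazyWalk_mul G h₀ h₁ hx (g := -g) (neg_le_neg hgx) fun v hv => neg_le_neg (hg v hv)
  simp only [Pi.neg_apply, mul_neg, sum_neg_distrib] at this
  linarith

lemma lazyWalk_affine (t α : ℝ) (x : V) :
    lazyWalk G (t * α + (1 - t)) x = t • lazyWalk G α x + (1 - t) • Pi.single x 1 := by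
  funext v
  by_cases h : v = x
  · subst h
    simp [lazyWalk]
  · by_cases hxv : G.Adj x v
    · simp [lazyWalk, h, hxv]
      ring
    · simp [lazyWalk, h, hxv]

end LazyWalk

section Curvature

open Filter Topology

variable {V : Type*} [Fintype V] [DecidableEq V] {G : SimpleGraph V} [DecidableRel G.Adj]
  {x y : V} {α : ℝ}

lemma kappaAlpha_of_adj (hxy : G.Adj x y) (α : ℝ) :
    kappaAlpha G α x y =
      1 - W (fun a b => (G.dist a b : ℝ)) (lazyWalk G α x) (lazyWalk G α y) := by
  simp [kappaAlpha, SimpleGraph.dist_eq_one_iff_adj.mpr hxy]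

/-- Tested against the 1-Lipschitz function `dist x ·`, which averages to at most `1 - α`
under `m_x^α` and at least `d(x,y) - (1 - α)` under `m_y^α`. -/
lemma dist_sub_le_W_lazyWalk (hG : G.Connected) (h₀ : 0 ≤ α) (h₁ : α ≤ 1)
    (hx : 0 < G.degree x) (hy : 0 < G.degree y) :
    G.dist x y - 2 * (1 - α) ≤
      W (fun a b => (G.dist a b : ℝ)) (lazyWalk G α x) (lazyWalk G α y) := by
  have hlip : ∀ u v, (G.dist x v : ℝ) - G.dist x u ≤ G.dist u v := fun u v => by
    have := hG.dist_triangle (u := x) (v := u) (w := v)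
    rw [sub_le_iff_le_add']
    exact_mod_cast this
  have hmx : ∑ v, lazyWalk G α x v * G.dist x v ≤ α * 0 + (1 - α) * 1 :=
    sum_lazyWalk_mul_le G h₀ h₁ hx (by simp) fun v hv => by
      simp [SimpleGraph.dist_eq_one_iff_adj.mpr hv]
  have hmy : α * G.dist x y + (1 - α) * (G.dist x y - 1) ≤ ∑ v, lazyWalk G α y v * G.dist x v :=
    le_sum_lazyWalk_mul G h₀ h₁ hy le_rfl fun v hv => by
      have := hG.dist_triangle (u := x) (v := v) (w := y)
      rw [SimpleGraph.dist_eq_one_iff_adj.mpr hv.symm] at this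
      rw [sub_le_iff_le_add]
      exact_mod_cast this
  have := sum_mul_sub_sum_mul_le_W hlip (isProbMeasure_lazyWalk G h₀ h₁ hx)
    (isProbMeasure_lazyWalk G h₀ h₁ hy)
  linarith

lemma kappaAlpha_le_of_adj (hG : G.Connected) (hxy : G.Adj x y) (h₀ : 0 ≤ α) (h₁ : α ≤ 1) :
    kappaAlpha G α x y ≤ 2 * (1 - α) := by
  have := dist_sub_le_W_lazyWalk hG h₀ h₁ hxy.degree_pos_left hxy.degree_pos_right
  rw [SimpleGraph.dist_eq_one_iff_adj.mpr hxy] at this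
  rw [kappaAlpha_of_adj hxy]
  push_cast at this
  linarith

/-- Mixing `m^α` with the Dirac masses in proportions `t : 1 - t` gives `m^(tα + 1 - t)`, and
`W` is jointly convex. -/
lemma mul_kappaAlpha_le_kappaAlpha_affine (hxy : G.Adj x y) (h₀ : 0 ≤ α) (h₁ : α ≤ 1) {t : ℝ}
    (ht₀ : 0 ≤ t) (ht₁ : t ≤ 1) :
    t * kappaAlpha G α x y ≤ kappaAlpha G (t * α + (1 - t)) x y := by
  have hd : ∀ a b, (0 : ℝ) ≤ G.dist a b := fun _ _ => Nat.cast_nonneg _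
  have hconv := W_convexComb_le hd ht₀ (sub_nonneg.2 ht₁) (add_sub_cancel t 1)
    (isProbMeasure_lazyWalk G h₀ h₁ hxy.degree_pos_left)
    (isProbMeasure_lazyWalk G h₀ h₁ hxy.degree_pos_right)
    (isProbMeasure_single x) (isProbMeasure_single y)
  have hδ : (1 - t) * W (fun a b => (G.dist a b : ℝ)) (Pi.single x 1) (Pi.single y 1) ≤ 1 - t := by
    simpa [SimpleGraph.dist_eq_one_iff_adj.mpr hxy] using
      mul_le_mul_of_nonneg_left (W_single_le hd x y) (sub_nonneg.2 ht₁)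
  rw [kappaAlpha_of_adj hxy, kappaAlpha_of_adj hxy, lazyWalk_affine, lazyWalk_affine]
  linarith

lemma monotoneOn_kappaAlpha_div (hxy : G.Adj x y) :
    MonotoneOn (fun α => kappaAlpha G α x y / (1 - α)) (Set.Ioo 0 1) := by
  rintro a ⟨ha₀, ha₁⟩ b ⟨-, hb₁⟩ hab
  have ha : 0 < 1 - a := by linarith
  have hb : 0 < 1 - b := by linarith
  set t := (1 - b) / (1 - a)
  have ht₀ : 0 < t := by positivity
  have ht : t * (1 - a) = 1 - b := div_mul_cancel₀ _ ha.ne'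
  have hkey := mul_kappaAlpha_le_kappaAlpha_affine hxy ha₀.le ha₁.le ht₀.le
    ((div_le_one ha).2 (by linarith))
  rw [show t * a + (1 - t) = b by linear_combination -ht] at hkey
  calc kappaAlpha G a x y / (1 - a) = t * kappaAlpha G a x y / (1 - b) := by
        rw [← ht]; field_simp
    _ ≤ kappaAlpha G b x y / (1 - b) := by gcongr

lemma tendsto_kappaLLY (hG : G.Connected) (hxy : G.Adj x y) :
    Tendsto (fun α => kappaAlpha G α x y / (1 - α)) (𝓝[<] 1) (𝓝 (kappaLLY G x y)) := by
  have hbdd : BddAbove ((fun α => kappaAlpha G α x y / (1 - α)) '' Set.Ioo 0 1) := by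
    refine ⟨2, ?_⟩
    rintro _ ⟨a, ⟨ha₀, ha₁⟩, rfl⟩
    rw [div_le_iff₀ (by linarith)]
    exact kappaAlpha_le_of_adj hG hxy ha₀.le ha₁.le
  have h := (monotoneOn_kappaAlpha_div hxy).tendsto_nhdsWithin_Ioo_left
    ⟨1 / 2, by norm_num, by norm_num⟩ hbdd
  rwa [kappaLLY, nhdsWithin_Ico_eq_nhdsLT zero_lt_one, h.limUnder_eq]

end Curvature

section BonnetMyers

variable {V : Type*} [Fintype V] [DecidableEq V] {G : SimpleGraph V} [DecidableRel G.Adj]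

lemma sum_darts_kappaAlpha_le [Nontrivial V] (hG : G.Connected) {x y : V} (p : G.Walk x y)
    (hp : p.length = G.dist x y) {α : ℝ} (h₀ : 0 ≤ α) (h₁ : α ≤ 1) :
    (p.darts.map fun e => kappaAlpha G α e.fst e.snd).sum ≤ 2 * (1 - α) := by
  have hdeg (v : V) : 0 < G.degree v := hG.preconnected.degree_pos_of_nontrivial v
  have hchain := W_le_sum_darts (d := fun a b => (G.dist a b : ℝ)) (fun _ _ => Nat.cast_nonneg _)
    (fun _ => by simp) (fun _ _ _ => by exact_mod_cast hG.dist_triangle)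
    (fun v => isProbMeasure_lazyWalk G h₀ h₁ (hdeg v)) p
  have hlow := dist_sub_le_W_lazyWalk hG h₀ h₁ (hdeg x) (hdeg y)
  have hone : ∀ e ∈ p.darts, W (fun a b => (G.dist a b : ℝ)) (lazyWalk G α e.fst)
      (lazyWalk G α e.snd) + kappaAlpha G α e.fst e.snd = 1 := fun e _ => by
    rw [kappaAlpha_of_adj e.adj]; ring
  have hsum : (p.darts.map fun e => W (fun a b => (G.dist a b : ℝ)) (lazyWalk G α e.fst)
      (lazyWalk G α e.snd)).sum + (p.darts.map fun e => kappaAlpha G α e.fst e.snd).sum =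
      G.dist x y := by
    rw [← List.sum_map_add, List.map_congr_left hone, List.map_const', List.sum_replicate,
      SimpleGraph.Walk.length_darts, hp, nsmul_one]
  linarith

lemma dist_mul_le_of_kappaLLY_ge (hG : G.Connected) {κ₀ : ℝ}
    (hcurv : ∀ x y, G.Adj x y → κ₀ ≤ kappaLLY G x y) (x y : V) : G.dist x y * κ₀ ≤ 2 := by
  rcases eq_or_ne x y with rfl | hne
  · simp
  have : Nontrivial V := ⟨⟨x, y, hne⟩⟩
  obtain ⟨p, hp⟩ := hG.exists_walk_length_eq_dist x y
  have hlim := tendsto_list_sum p.darts fun e _ => tendsto_kappaLLY hG e.adj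
  have hsum : (p.darts.map fun e => kappaLLY G e.fst e.snd).sum ≤ 2 := by
    refine le_of_tendsto hlim ?_
    filter_upwards [Ioo_mem_nhdsLT zero_lt_one] with α ⟨h₀, h₁⟩
    simp only [div_eq_mul_inv, List.sum_map_mul_right]
    rw [← div_eq_mul_inv, div_le_iff₀ (by linarith)]
    exact sum_darts_kappaAlpha_le hG p hp h₀.le h₁.le
  calc (G.dist x y : ℝ) * κ₀ = (p.darts.map fun e => kappaLLY G e.fst e.snd).length • κ₀ := by
        rw [List.length_map, SimpleGraph.Walk.length_darts, hp, nsmul_eq_mul]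
    _ ≤ (p.darts.map fun e => kappaLLY G e.fst e.snd).sum :=
        List.card_nsmul_le_sum _ _ (List.forall_mem_map.2 fun e _ => hcurv _ _ e.adj)
    _ ≤ 2 := hsum

end BonnetMyers

/-- Lin–Lu–Yau Bonnet–Myers theorem: positively curved graphs have diameter `≤ ⌊2/κ₀⌋`. -/
theorem stmt_5 {V : Type*} [Fintype V] [DecidableEq V] (G : SimpleGraph V)
    [DecidableRel G.Adj] (hG : G.Connected) (κ₀ : ℝ) (hκ : 0 < κ₀)
    (hcurv : ∀ x y, G.Adj x y → κ₀ ≤ kappaLLY G x y) :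
    (gDiam G : ℤ) ≤ ⌊2 / κ₀⌋ := by
  have : Nonempty V := hG.nonempty
  obtain ⟨q, -, hq⟩ := exists_mem_eq_sup univ univ_nonempty fun p : V × V => G.dist p.1 p.2
  rw [Int.le_floor, gDiam, hq, le_div_iff₀ hκ]
  exact_mod_cast dist_mul_le_of_kappaLLY_ge hG hcurv q.1 q.2
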